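/- arXiv:2503.09192 — 3 statements merged into one kernel-verified Lean document; each statement's English description precedes it below -/
import Mathlib

section
/- Let σ > 0, let m₁, m₂ be real numbers, and let α ∈ (1, ∞). Then the Rényi divergence of order α between the one-dimensional Gaussian measures N(m₁, σ²) and N(m₂, σ²) equals α·(m₁ − m₂)²/(2σ²). In particular, the Gaussian mechanism with noise scale σ applied to a query of L₂-sensitivity Sen = |m₁ − m₂| satisfies (α, α·Sen²/(2σ²))-RDP. -/
open MeasureTheory ProbabilityTheory Real

noncomputable def renyiDiv {Ω : Type*} [MeasurableSpace Ω] (α : ℝ) (μ ν : Measure Ω) : ℝ :=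
  (α - 1)⁻¹ * Real.log (∫ x, ((μ.rnDeriv ν x).toReal) ^ α ∂ν)

open scoped NNReal

namespace ProbabilityTheory

variable {m₁ m₂ : ℝ} {v : ℝ≥0}

lemma rnDeriv_gaussianReal_gaussianReal (hv : v ≠ 0) :
    (gaussianReal m₁ v).rnDeriv (gaussianReal m₂ v)
      =ᵐ[gaussianReal m₂ v] fun x ↦ gaussianPDF m₁ v x / gaussianPDF m₂ v x := by
  have hac := gaussianReal_absolutelyContinuous m₂ hv
  filter_upwards [Measure.rnDeriv_eq_div (gaussianReal_absolutelyContinuous m₁ hv) hac,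
    hac.ae_le (rnDeriv_gaussianReal m₁ v), hac.ae_le (rnDeriv_gaussianReal m₂ v)]
    with x hdiv h₁ h₂
  rw [hdiv, h₁, h₂]

-- Completing the square in the exponent `-((1 - α) (x - m₂)² + α (x - m₁)²) / (2v)`.
lemma gaussianPDFReal_mul_div_rpow (hv : v ≠ 0) (α x : ℝ) :
    gaussianPDFReal m₂ v x * (gaussianPDFReal m₁ v x / gaussianPDFReal m₂ v x) ^ α =
      exp (α * (α - 1) * (m₁ - m₂) ^ 2 / (2 * v)) *
        gaussianPDFReal (α * m₁ + (1 - α) * m₂) v x := by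
  have hv' : (v : ℝ) ≠ 0 := by exact_mod_cast hv
  have hc : (√(2 * π * v))⁻¹ ≠ 0 := by positivity
  have hexponent :
      -(x - m₂) ^ 2 / (2 * v) + (-(x - m₁) ^ 2 / (2 * v) - -(x - m₂) ^ 2 / (2 * v)) * α
        = α * (α - 1) * (m₁ - m₂) ^ 2 / (2 * v)
          + -(x - (α * m₁ + (1 - α) * m₂)) ^ 2 / (2 * v) := by
    field_simp
    ring
  simp only [gaussianPDFReal]
  rw [mul_div_mul_left _ _ hc, ← exp_sub, ← exp_mul, mul_assoc, ← exp_add, hexponent, exp_add]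
  ring

lemma integral_gaussianPDFReal_mul_div_rpow (hv : v ≠ 0) (α : ℝ) :
    ∫ x, gaussianPDFReal m₂ v x * (gaussianPDFReal m₁ v x / gaussianPDFReal m₂ v x) ^ α =
      exp (α * (α - 1) * (m₁ - m₂) ^ 2 / (2 * v)) := by
  simp_rw [gaussianPDFReal_mul_div_rpow hv]
  rw [integral_const_mul, integral_gaussianPDFReal_eq_one _ hv, mul_one]

lemma integral_rnDeriv_gaussianReal_rpow (hv : v ≠ 0) (α : ℝ) :
    ∫ x, ((gaussianReal m₁ v).rnDeriv (gaussianReal m₂ v) x).toReal ^ α ∂gaussianReal m₂ v =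
      exp (α * (α - 1) * (m₁ - m₂) ^ 2 / (2 * v)) := by
  have hratio : (fun x ↦ ((gaussianReal m₁ v).rnDeriv (gaussianReal m₂ v) x).toReal ^ α)
      =ᵐ[gaussianReal m₂ v] fun x ↦ (gaussianPDFReal m₁ v x / gaussianPDFReal m₂ v x) ^ α := by
    filter_upwards [rnDeriv_gaussianReal_gaussianReal hv] with x hx
    rw [hx, ENNReal.toReal_div, toReal_gaussianPDF, toReal_gaussianPDF]
  rw [integral_congr_ae hratio, integral_gaussianReal_eq_integral_smul hv,
    ← integral_gaussianPDFReal_mul_div_rpow hv]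
  simp only [smul_eq_mul]

end ProbabilityTheory

/-- **Rényi divergence between Gaussians of equal variance.**
For `σ > 0`, means `m₁, m₂` and `α ∈ (1, ∞)`,
`D_α(N(m₁, σ²) ‖ N(m₂, σ²)) = α (m₁ - m₂)² / (2 σ²)`; in particular the Gaussian
mechanism with noise scale `σ` at sensitivity `|m₁ - m₂|` is `(α, α |m₁-m₂|²/(2σ²))`-RDP. -/
theorem renyiDiv_gaussianReal (σ : NNReal) (hσ : 0 < σ) (m₁ m₂ : ℝ) (α : ℝ) (hα : 1 < α) :
    renyiDiv α (gaussianReal m₁ (σ ^ 2)) (gaussianReal m₂ (σ ^ 2)) =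
      α * (m₁ - m₂) ^ 2 / (2 * (σ : ℝ) ^ 2) := by
  have hσ' : (σ : ℝ) ≠ 0 := by exact_mod_cast hσ.ne'
  have hα' : α - 1 ≠ 0 := by linarith
  rw [renyiDiv, integral_rnDeriv_gaussianReal_rpow (by positivity), log_exp, NNReal.coe_pow]
  field_simp
end

section
/- Let σ > 0, Δ ∈ ℝ, λ > 0 a real number, let μ = N(m + Δ, σ²) and ν = N(m, σ²) be one-dimensional Gaussian measures. Then the λ-th moment of the privacy loss of the Gaussian mechanism is ∫ (dμ/dν)^λ dμ = exp(λ(λ+1)Δ²/(2σ²)); equivalently, the moments accountant of the Gaussian mechanism at a query of sensitivity Δ is α(λ) = λ(λ+1)Δ²/(2σ²). -/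
open MeasureTheory ProbabilityTheory Real

/-- **Moments accountant of the Gaussian mechanism.**
For `σ > 0`, `Δ ∈ ℝ`, real `λ > 0`, `μ = N(m + Δ, σ²)` and `ν = N(m, σ²)`, the `λ`-th
moment of the privacy loss is `∫ (dμ/dν)^λ dμ = exp (λ (λ+1) Δ² / (2 σ²))`, i.e. the
moments accountant is `α(λ) = λ (λ+1) Δ² / (2 σ²)`. -/
theorem gaussian_privacy_loss_moment (σ : NNReal) (hσ : 0 < σ) (m Δ : ℝ) (l : ℝ) (hl : 0 < l) :
    ∫ x, (((gaussianReal (m + Δ) (σ ^ 2)).rnDeriv (gaussianReal m (σ ^ 2)) x).toReal) ^ l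
        ∂(gaussianReal (m + Δ) (σ ^ 2)) =
      Real.exp (l * (l + 1) * Δ ^ 2 / (2 * (σ : ℝ) ^ 2)) := by
  set v : NNReal := σ ^ 2 with hv_def
  have hv : v ≠ 0 := pow_ne_zero _ hσ.ne'
  have hvR : (0:ℝ) < (v:ℝ) := by positivity
  -- rnDeriv formula a.e. w.r.t. volume
  have h1 : (gaussianReal (m + Δ) v).rnDeriv (gaussianReal m v)
      =ᵐ[(volume : Measure ℝ)]
      fun x => ENNReal.ofReal (gaussianPDFReal (m + Δ) v x / gaussianPDFReal m v x) := by
    have hmeas : AEMeasurable (gaussianPDF m v) (volume : Measure ℝ) :=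
      (measurable_gaussianPDF m v).aemeasurable
    have hne0 : ∀ᵐ x ∂(volume : Measure ℝ), gaussianPDF m v x ≠ 0 :=
      ae_of_all _ fun x => (gaussianPDF_pos m hv x).ne'
    have hnetop : ∀ᵐ x ∂(volume : Measure ℝ), gaussianPDF m v x ≠ ⊤ :=
      ae_of_all _ fun x => ENNReal.ofReal_ne_top
    have h := Measure.rnDeriv_withDensity_right (gaussianReal (m + Δ) v) volume
        hmeas hne0 hnetop
    rw [← gaussianReal_of_var_ne_zero m hv] at h
    filter_upwards [h, rnDeriv_gaussianReal (m + Δ) v] with x hx hx2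
    rw [hx, hx2]
    have hpos : 0 < gaussianPDFReal m v x := gaussianPDFReal_pos m v x hv
    rw [gaussianPDF, gaussianPDF, ← ENNReal.ofReal_inv_of_pos hpos,
      ← ENNReal.ofReal_mul (by positivity)]
    rw [div_eq_inv_mul]
  have h2 : ∀ᵐ x ∂(gaussianReal (m + Δ) v),
      ((gaussianReal (m + Δ) v).rnDeriv (gaussianReal m v) x).toReal ^ l
        = (gaussianPDFReal (m + Δ) v x / gaussianPDFReal m v x) ^ l := by
    filter_upwards [gaussianReal_absolutelyContinuous (m + Δ) hv h1] with x hx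
    rw [hx, ENNReal.toReal_ofReal (div_nonneg (gaussianPDFReal_nonneg _ _ _) (gaussianPDFReal_nonneg _ _ _))]
  rw [integral_congr_ae h2]
  -- rewrite measure as withDensity
  rw [gaussianReal_of_var_ne_zero (m + Δ) hv]
  have : (gaussianPDF (m + Δ) v) = fun x => ((Real.toNNReal (gaussianPDFReal (m + Δ) v x) : NNReal) : ENNReal) := rfl
  rw [this, integral_withDensity_eq_integral_smul
    ((measurable_gaussianPDFReal (m + Δ) v).real_toNNReal)]
  -- pointwise computation
  have key : ∀ x : ℝ,
      (Real.toNNReal (gaussianPDFReal (m + Δ) v x)) •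
        ((gaussianPDFReal (m + Δ) v x / gaussianPDFReal m v x) ^ l)
      = Real.exp (l * (l + 1) * Δ ^ 2 / (2 * (σ : ℝ) ^ 2)) *
          gaussianPDFReal (m + Δ + l * Δ) v x := by
    intro x
    have hc : (0:ℝ) < (Real.sqrt (2 * Real.pi * v))⁻¹ := by positivity
    rw [NNReal.smul_def, Real.coe_toNNReal _ (gaussianPDFReal_nonneg _ _ _)]
    simp only [gaussianPDFReal]
    set c : ℝ := (Real.sqrt (2 * Real.pi * v))⁻¹ with hc_def
    set A : ℝ := -(x - (m + Δ)) ^ 2 / (2 * v) with hA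
    set B : ℝ := -(x - m) ^ 2 / (2 * v) with hB
    set C : ℝ := -(x - (m + Δ + l * Δ)) ^ 2 / (2 * v) with hC
    have hratio : c * rexp A / (c * rexp B) = rexp (A - B) := by
      rw [mul_div_mul_left _ _ hc.ne', Real.exp_sub]
    have hσR : ((σ : ℝ)) ≠ 0 := by exact_mod_cast hσ.ne'
    have hvσ : ((v : ℝ)) = (σ : ℝ) ^ 2 := by rw [hv_def]; push_cast; ring
    have hE : A + (A - B) * l = l * (l + 1) * Δ ^ 2 / (2 * (σ : ℝ) ^ 2) + C := by
      rw [hA, hB, hC, hvσ]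
      field_simp
      ring
    rw [hratio, ← Real.exp_mul, smul_eq_mul, mul_assoc, ← Real.exp_add, hE, Real.exp_add]
    ring
  simp only [key]
  rw [integral_const_mul, integral_gaussianPDFReal_eq_one _ hv, mul_one]
end

section
/- Let μ and ν be probability measures on a measurable space that are (ε, δ)-indistinguishable, let q ∈ [0, 1], and consider the subsampled pair consisting of the mixture (1 − q)·ν + q·μ and ν. Then for every measurable set O, ((1 − q)·ν + q·μ)(O) ≤ (1 + q·(e^ε − 1)) · ν(O) + q·δ; that is, the mixture and ν are (log(1 + q(e^ε − 1)), q·δ)-indistinguishable. (This is the privacy amplification by client subsampling with probability q used in the paper's Theorem 1.) -/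
open MeasureTheory Real

/-- A pair of measures `(μ, ν)` is `(ε, δ)`-indistinguishable if
`μ O ≤ exp ε * ν O + δ` for every measurable set `O`. -/
def Indistinguishable {Ω : Type*} [MeasurableSpace Ω] (ε δ : ℝ) (μ ν : Measure Ω) : Prop :=
  ∀ O : Set Ω, MeasurableSet O → μ O ≤ ENNReal.ofReal (Real.exp ε) * ν O + ENNReal.ofReal δ

/-- **Privacy amplification by subsampling.**
If `(μ, ν)` is `(ε, δ)`-indistinguishable and `q ∈ [0, 1]`, then the mixture
`(1 - q) ν + q μ` and `ν` are `(log (1 + q (e^ε - 1)), q δ)`-indistinguishable: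
`((1 - q) ν + q μ)(O) ≤ (1 + q (e^ε - 1)) ν(O) + q δ` for every measurable `O`. -/
theorem subsampling_amplification {Ω : Type*} [MeasurableSpace Ω] (μ ν : Measure Ω)
    [IsProbabilityMeasure μ] [IsProbabilityMeasure ν] (ε δ : ℝ)
    (h : Indistinguishable ε δ μ ν) (q : NNReal) (hq : q ≤ 1) :
    ∀ O : Set Ω, MeasurableSet O →
      ((1 - q) • ν + q • μ) O ≤
        ENNReal.ofReal (1 + (q : ℝ) * (Real.exp ε - 1)) * ν O +
          ENNReal.ofReal ((q : ℝ) * δ) := by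
  intro O hO
  have hμ := h O hO
  have hq' : (q : ℝ) ≤ 1 := hq
  have key : ENNReal.ofReal (1 + (q : ℝ) * (Real.exp ε - 1))
      = ((1 - q : NNReal) : ENNReal) + (q : ENNReal) * ENNReal.ofReal (Real.exp ε) := by
    rw [show (1 + (q : ℝ) * (Real.exp ε - 1)) = (1 - (q : ℝ)) + q * Real.exp ε by ring,
      ENNReal.ofReal_add (by linarith) (by positivity),
      ENNReal.ofReal_mul q.coe_nonneg, ENNReal.ofReal_coe_nnreal,
      ENNReal.ofReal_sub _ q.coe_nonneg, ENNReal.ofReal_one, ENNReal.ofReal_coe_nnreal,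
      ENNReal.coe_sub, ENNReal.coe_one]
  simp only [Measure.coe_add, Pi.add_apply, Measure.smul_apply, smul_eq_mul]
  rw [key, ENNReal.ofReal_mul q.coe_nonneg, ENNReal.ofReal_coe_nnreal, add_mul]
  calc ((1 - q : NNReal) : ENNReal) * ν O + (q : ENNReal) * μ O
      ≤ ((1 - q : NNReal) : ENNReal) * ν O
        + (q : ENNReal) * (ENNReal.ofReal (Real.exp ε) * ν O + ENNReal.ofReal δ) := by
        gcongr
    _ = _ := by ring
end
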